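/- Soundness of Axiom Max for maximal simplicial models: for every maximal simplicial model C, every world w of C, and every proper subset B ⊊ A, we have C,w ⊨ alive_B ⇒ ¬D_B ¬dead_{A∖B}. Consequently the proof system SCmax is sound with respect to the class of maximal simplicial models. -/

import Mathlib

attribute [local instance] Classical.propDecidable

noncomputable section

/-- Formulas of the epistemic language `L_D` with distributed knowledge `D_B`
for nonempty groups `B` of agents. -/
inductive Form (A AP : Type) : Type
  | atom : AP → Form A AP
  | neg  : Form A AP → Form A AP
  | and  : Form A AP → Form A AP → Form A AP
  | dk   : (B : Finset A) → B.Nonempty → Form A AP → Form A AP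

namespace Form

variable {A AP : Type}

/-- Disjunction, `φ ∨ ψ := ¬(¬φ ∧ ¬ψ)`. -/
def or (φ ψ : Form A AP) : Form A AP := neg ((neg φ).and (neg ψ))

/-- Implication, `φ ⇒ ψ := ¬φ ∨ ψ`. -/
def imp (φ ψ : Form A AP) : Form A AP := (neg φ).or ψ

/-- `⊤ := p ∨ ¬p`. -/
def verum [Nonempty AP] : Form A AP :=
  (atom (Classical.arbitrary AP)).or (neg (atom (Classical.arbitrary AP)))

/-- `⊥ := ¬⊤`. -/
def falsum [Nonempty AP] : Form A AP := neg verum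

/-- Individual knowledge `K_a φ := D_{{a}} φ`. -/
def K (a : A) (φ : Form A AP) : Form A AP := dk {a} (Finset.singleton_nonempty a) φ

/-- `dead_a := K_a ⊥`. -/
def deadAgent [Nonempty AP] (a : A) : Form A AP := K a falsum

/-- `alive_a := ¬dead_a`. -/
def aliveAgent [Nonempty AP] (a : A) : Form A AP := (deadAgent a).neg

/-- `alive_B := ¬ D_B ⊥`. -/
def aliveGrp [Nonempty AP] (B : Finset A) (hB : B.Nonempty) : Form A AP := (dk B hB falsum).neg

/-- Finite conjunction. -/
def bigAnd [Nonempty AP] : List (Form A AP) → Form A AP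
  | [] => verum
  | φ :: t => φ.and (bigAnd t)

/-- Finite disjunction. -/
def bigOr [Nonempty AP] : List (Form A AP) → Form A AP
  | [] => falsum
  | φ :: t => φ.or (bigOr t)

/-- `dead_C := ⋀_{a ∈ C} dead_a`. -/
def deadGrp [Nonempty AP] (C : Finset A) : Form A AP := bigAnd (C.toList.map deadAgent)

end Form

/-- A propositional tautology: true under every assignment that interprets `¬` and `∧`
classically (atoms and `D_B`-formulas are treated as opaque). -/
def IsTaut {A AP : Type} (φ : Form A AP) : Prop :=
  ∀ v : Form A AP → Prop,
    (∀ ψ : Form A AP, v ψ.neg ↔ ¬ v ψ) →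
    (∀ ψ χ : Form A AP, v (ψ.and χ) ↔ (v ψ ∧ v χ)) →
    v φ

theorem unionNE {α : Type} [DecidableEq α] {s t : Finset α} (h : s.Nonempty) :
    (s ∪ t).Nonempty :=
  ⟨h.choose, Finset.mem_union_left _ h.choose_spec⟩

section ProofSystem

variable {A AP : Type} [Fintype A] [Nonempty AP]

/-- The proof system `SC` (axioms `K`, `B`, `4`, `Mono`, `Union`, `NE`, `P`, all
propositional tautologies, modus ponens and necessitation), extended by an arbitrary
additional set `Ax` of axioms. -/
inductive Prf (Ax : Form A AP → Prop) : Form A AP → Prop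
  | taut {φ : Form A AP} : IsTaut φ → Prf Ax φ
  | mp {φ ψ : Form A AP} : Prf Ax (φ.imp ψ) → Prf Ax φ → Prf Ax ψ
  | nec {φ : Form A AP} (B : Finset A) (hB : B.Nonempty) :
      Prf Ax φ → Prf Ax (Form.dk B hB φ)
  | axK {φ ψ : Form A AP} (B : Finset A) (hB : B.Nonempty) :
      Prf Ax ((Form.dk B hB (φ.imp ψ)).imp ((Form.dk B hB φ).imp (Form.dk B hB ψ)))
  | axB {φ : Form A AP} (B : Finset A) (hB : B.Nonempty) :
      Prf Ax (φ.imp (Form.dk B hB (Form.neg (Form.dk B hB φ.neg))))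
  | ax4 {φ : Form A AP} (B : Finset A) (hB : B.Nonempty) :
      Prf Ax ((Form.dk B hB φ).imp (Form.dk B hB (Form.dk B hB φ)))
  | axMono {φ : Form A AP} (B B' : Finset A) (hB : B.Nonempty) (hB' : B'.Nonempty)
      (hsub : B ⊆ B') : Prf Ax ((Form.dk B hB φ).imp (Form.dk B' hB' φ))
  | axUnion (B B' : Finset A) (hB : B.Nonempty) (hB' : B'.Nonempty) :
      Prf Ax (((Form.aliveGrp B hB).and (Form.aliveGrp B' hB')).imp
        (Form.aliveGrp (B ∪ B') (unionNE hB)))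
  | axNE : Prf Ax (Form.bigOr ((Finset.univ : Finset A).toList.map Form.aliveAgent))
  | axP {φ : Form A AP} (B : Finset A) (hB : B.Nonempty) :
      Prf Ax ((((Form.aliveGrp B hB).and (Form.deadGrp Bᶜ)).and φ).imp
        (Form.dk B hB ((Form.deadGrp Bᶜ).imp φ)))
  | extra {φ : Form A AP} : Ax φ → Prf Ax φ

/-- Provability in `SC` itself (no extra axioms). -/
def SC : Form A AP → Prop := Prf (fun _ => False)

/-- Instances of Axiom `Min : alive_B ∧ dead_{A∖B} ⇒ D_B dead_{A∖B}` for `B ⊊ A`. -/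
def MinAx : Form A AP → Prop := fun φ =>
  ∃ (B : Finset A) (hB : B.Nonempty), B ≠ Finset.univ ∧
    φ = ((Form.aliveGrp B hB).and (Form.deadGrp Bᶜ)).imp (Form.dk B hB (Form.deadGrp Bᶜ))

/-- Instances of Axiom `Max : alive_B ⇒ ¬ D_B ¬ dead_{A∖B}` for `B ⊊ A`. -/
def MaxAx : Form A AP → Prop := fun φ =>
  ∃ (B : Finset A) (hB : B.Nonempty), B ≠ Finset.univ ∧
    φ = (Form.aliveGrp B hB).imp (Form.neg (Form.dk B hB (Form.neg (Form.deadGrp Bᶜ))))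

/-- Provability in `SCmin = SC + Min`. -/
def SCmin : Form A AP → Prop := Prf MinAx

/-- Provability in `SCmax = SC + Max`. -/
def SCmax : Form A AP → Prop := Prf MaxAx

/-- `Γ ⊢_P φ` : some finite conjunction of members of `Γ` provably implies `φ`. -/
def ProvesFrom (P : Form A AP → Prop) (Γ : Set (Form A AP)) (φ : Form A AP) : Prop :=
  ∃ L : List (Form A AP), (∀ γ ∈ L, γ ∈ Γ) ∧ P ((Form.bigAnd L).imp φ)

/-- Consistency of a set of formulas with respect to a provability predicate `P`. -/
def ConsistentSet (P : Form A AP → Prop) (Γ : Set (Form A AP)) : Prop :=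
  ¬ ProvesFrom P Γ Form.falsum

/-- Maximal consistent sets of formulas. -/
def MaxConsistent (P : Form A AP → Prop) (Γ : Set (Form A AP)) : Prop :=
  ConsistentSet P Γ ∧ ∀ φ ∉ Γ, ¬ ConsistentSet P (insert φ Γ)

end ProofSystem

/-! ### Simplicial models -/

/-- The data of a (generalized) simplicial model: a set `S` of simplexes over the vertex
type `V`, a colouring `chi`, a set of worlds `Wld` and a labelling of worlds. -/
structure SimpData (A AP V : Type) where
  S : Set (Finset V)
  chi : V → A
  Wld : Set (Finset V)
  label : Finset V → Set AP

namespace SimpData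

variable {A AP V : Type}

/-- A facet: a simplex maximal under inclusion. -/
def IsFacet (C : SimpData A AP V) (X : Finset V) : Prop :=
  X ∈ C.S ∧ ∀ Y ∈ C.S, X ⊆ Y → X = Y

/-- `⟨V,S,chi⟩` is a chromatic simplicial complex: simplexes are nonempty, every
singleton is a simplex, `S` is downward closed, and every simplex has pairwise
distinct colours. -/
def IsComplex (C : SimpData A AP V) : Prop :=
  (∀ X ∈ C.S, X.Nonempty) ∧
  (∀ v : V, ({v} : Finset V) ∈ C.S) ∧
  (∀ X ∈ C.S, ∀ Y : Finset V, Y ⊆ X → Y.Nonempty → Y ∈ C.S) ∧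
  (∀ X ∈ C.S, ∀ v ∈ X, ∀ w ∈ X, C.chi v = C.chi w → v = w)

/-- `C` is a generalized simplicial model: a chromatic simplicial complex together
with a set of worlds `Wld` with `Facets(C) ⊆ Wld ⊆ S`. -/
def IsModel (C : SimpData A AP V) : Prop :=
  C.IsComplex ∧ (∀ X, C.IsFacet X → X ∈ C.Wld) ∧ C.Wld ⊆ C.S

/-- The model is minimal: the worlds are exactly the facets. -/
def Minimal (C : SimpData A AP V) : Prop := ∀ X, X ∈ C.Wld ↔ C.IsFacet X

/-- The model is maximal: every simplex is a world. -/
def Maximal (C : SimpData A AP V) : Prop := C.Wld = C.S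

end SimpData

/-- Satisfaction on simplicial models: `C,w ⊨ D_B φ` iff `φ` holds at every world `w'`
with `B ⊆ chi(w ∩ w')`. -/
def SimpData.sat {A AP V : Type} (C : SimpData A AP V) : Finset V → Form A AP → Prop
  | w, .atom p => p ∈ C.label w
  | w, .neg φ => ¬ C.sat w φ
  | w, .and φ ψ => C.sat w φ ∧ C.sat w ψ
  | w, .dk B _ φ => ∀ w' ∈ C.Wld, (↑B : Set A) ⊆ C.chi '' ((↑w : Set V) ∩ ↑w') → C.sat w' φ

/-! ### Partial epistemic models -/

/-- The data of a partial epistemic model: an accessibility relation for each agent and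
a labelling of worlds. -/
structure PEData (A AP W : Type) where
  rel : A → W → W → Prop
  label : W → Set AP

namespace PEData

variable {A AP W : Type}

/-- Each relation is a partial equivalence relation (symmetric and transitive). -/
def IsPE (M : PEData A AP W) : Prop := ∀ a : A, Symmetric (M.rel a) ∧ Transitive (M.rel a)

/-- The set of agents alive in a world. -/
def live (M : PEData A AP W) (w : W) : Set A := {a | M.rel a w w}

/-- Every world has at least one alive agent. -/
def NoEmptyWorld (M : PEData A AP W) : Prop := ∀ w : W, (M.live w).Nonempty

/-- Distinct worlds with the same alive agents are distinguished by some alive agent. -/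
def Proper (M : PEData A AP W) : Prop :=
  ∀ w w' : W, w ≠ w' → M.live w = M.live w' → ∃ a ∈ M.live w, ¬ M.rel a w w'

/-- The model has no sub-world. -/
def Minimal (M : PEData A AP W) : Prop :=
  ∀ w w' : W, M.live w ⊂ M.live w' → ∃ a ∈ M.live w, ¬ M.rel a w w'

/-- The model has all sub-worlds. -/
def Maximal (M : PEData A AP W) : Prop :=
  ∀ w' : W, ∀ B : Set A, B.Nonempty → B ⊂ M.live w' →
    ∃ w : W, M.live w = B ∧ ∀ a ∈ B, M.rel a w w'

end PEData

/-- Satisfaction on partial epistemic models: `M,w ⊨ D_B φ` iff `φ` holds at every `w'`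
with `w ∼_a w'` for all `a ∈ B`. -/
def PEData.sat {A AP W : Type} (M : PEData A AP W) : W → Form A AP → Prop
  | w, .atom p => p ∈ M.label w
  | w, .neg φ => ¬ M.sat w φ
  | w, .and φ ψ => M.sat w φ ∧ M.sat w ψ
  | w, .dk B _ φ => ∀ w' : W, (∀ a ∈ B, M.rel a w w') → M.sat w' φ

/-- The partial epistemic model `κ(C)` associated with a simplicial model `C`:
same worlds, `w ∼_a w'` iff `a ∈ chi(w ∩ w')`, same labelling. -/
def kappa {A AP V : Type} (C : SimpData A AP V) : PEData A AP {w : Finset V // w ∈ C.Wld} where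
  rel := fun a w w' => a ∈ C.chi '' ((↑w.1 : Set V) ∩ ↑w'.1)
  label := fun w => C.label w.1

/-- Vertices of `σ(M)`: pairs `v^w_a = (a, [w]_a)` with `a` alive in `w`. -/
def sigmaVert {A AP W : Type} (M : PEData A AP W) : Type :=
  {v : A × Set W // ∃ w : W, M.rel v.1 w w ∧ v.2 = {w' | M.rel v.1 w w'}}

/-- The world `X_w = { v^w_a | a ∈ live(w) }` of `σ(M)`. -/
def sigmaWorld {A AP W : Type} [Fintype A] (M : PEData A AP W) (w : W) :
    Finset (sigmaVert M) :=
  ((Finset.univ : Finset A).filter (fun a => M.rel a w w)).attach.image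
    (fun a => ⟨(a.1, {w' | M.rel a.1 w w'}),
      ⟨w, by exact (Finset.mem_filter.mp a.2).2, rfl⟩⟩)

/-- The simplicial model `σ(M)` associated with a partial epistemic model `M`:
simplexes are the nonempty subsets of the sets `X_w`, worlds are the `X_w`,
colouring is the first projection, and `ℓ(X_w) = L(w)`. -/
def sigmaModel {A AP W : Type} [Fintype A] (M : PEData A AP W) :
    SimpData A AP (sigmaVert M) where
  S := {X | X.Nonempty ∧ ∃ w : W, X ⊆ sigmaWorld M w}
  chi := fun v => v.1.1
  Wld := {X | ∃ w : W, X = sigmaWorld M w}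
  label := fun X => {p | ∃ w : W, X = sigmaWorld M w ∧ p ∈ M.label w}

/-! ### Pseudo-models, the canonical model and unravelling -/

/-- The data of a pseudo-model: a relation `∼_B` for every group `B ⊆ A`. -/
structure PseudoData (A AP W : Type) where
  rel : Finset A → W → W → Prop
  label : W → Set AP

/-- `M` is a pseudo-model: each `∼_B` is symmetric and transitive, the relations are
antitone (`∼_{B'} ⊆ ∼_B` for `B ⊆ B'`), and `w ∼_B w` together with `w ∼_{B'} w`
implies `w ∼_{B ∪ B'} w`. -/
def PseudoData.IsPseudo {A AP W : Type} [DecidableEq A] (M : PseudoData A AP W) : Prop :=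
  (∀ B : Finset A, Symmetric (M.rel B)) ∧
  (∀ B : Finset A, Transitive (M.rel B)) ∧
  (∀ B B' : Finset A, B ⊆ B' → ∀ w w' : W, M.rel B' w w' → M.rel B w w') ∧
  (∀ (w : W) (B B' : Finset A), M.rel B w w → M.rel B' w w → M.rel (B ∪ B') w w)

/-- Satisfaction on pseudo-models: `D_B φ` quantifies over `∼_B`-successors. -/
def PseudoData.sat {A AP W : Type} (M : PseudoData A AP W) : W → Form A AP → Prop
  | w, .atom p => p ∈ M.label w
  | w, .neg φ => ¬ M.sat w φ
  | w, .and φ ψ => M.sat w φ ∧ M.sat w ψ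
  | w, .dk B _ φ => ∀ w' : W, M.rel B w w' → M.sat w' φ

/-- The canonical pseudo-model of a proof system `P`: worlds are the maximal
`P`-consistent sets, `Γ ∼_B Δ` iff every `φ` with `D_B φ ∈ Γ` satisfies `φ ∈ Δ`,
and `L(Γ) = Γ ∩ AP`. -/
def canonicalPsm (A AP : Type) [Fintype A] [Nonempty AP] (P : Form A AP → Prop) :
    PseudoData A AP {Γ : Set (Form A AP) // MaxConsistent P Γ} where
  rel := fun B Γ Δ => ∀ (hB : B.Nonempty) (φ : Form A AP), Form.dk B hB φ ∈ Γ.1 → φ ∈ Δ.1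
  label := fun Γ => {p | Form.atom p ∈ Γ.1}

/-- `IsHist M w l` : the sequence starting at `w` with steps `l` is a history of `M`. -/
def IsHist {A AP W : Type} (M : PseudoData A AP W) : W → List (Finset A × W) → Prop
  | _, [] => True
  | w, (B, w') :: t => M.rel B w w' ∧ IsHist M w' t

/-- A history `(w₀, B₁, w₁, …, B_k, w_k)` of a pseudo-model `M`. -/
structure Hist {A AP W : Type} (M : PseudoData A AP W) where
  first : W
  steps : List (Finset A × W)
  valid : IsHist M first steps

/-- The last world of a history. -/
def Hist.last {A AP W : Type} {M : PseudoData A AP W} (h : Hist M) : W :=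
  (h.steps.map Prod.snd).getLastD h.first

/-- `h →_a h'` : `h'` extends `h` by one step `(B, w)` with `a ∈ B`. -/
def histStep {A AP W : Type} (M : PseudoData A AP W) (a : A) (h h' : Hist M) : Prop :=
  ∃ (B : Finset A) (w : W), a ∈ B ∧ h'.first = h.first ∧ h'.steps = h.steps ++ [(B, w)]

/-- `∼^U_a` : the symmetric-transitive closure of `→_a`. -/
def histRel {A AP W : Type} (M : PseudoData A AP W) (a : A) : Hist M → Hist M → Prop :=
  Relation.TransGen (fun h h' => histStep M a h h' ∨ histStep M a h' h)

/-- The unravelling `U(M)` of a pseudo-model `M`: worlds are histories, relations are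
the `∼^U_a`, and `L^U(h) = L(last h)`. -/
def unravel {A AP W : Type} (M : PseudoData A AP W) : PEData A AP (Hist M) where
  rel := histRel M
  label := fun h => M.label h.last

/-- World-equivalence `w ≡ w'` : same alive agents and related by every alive agent. -/
def pequiv {A AP W : Type} (M : PEData A AP W) (w w' : W) : Prop :=
  M.live w = M.live w' ∧ ∀ a ∈ M.live w, M.rel a w w'

/-- The quotient of a partial epistemic model by world-equivalence. -/
def properify {A AP W : Type} (M : PEData A AP W) : PEData A AP (Quot (pequiv M)) where
  rel := fun a x y => ∃ w w' : W, x = Quot.mk _ w ∧ y = Quot.mk _ w' ∧ M.rel a w w'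
  label := fun x => {p | ∃ w : W, x = Quot.mk _ w ∧ p ∈ M.label w}

/-! ### Local simplicial models, morphisms and the guarded positive fragment -/

/-- The data of a local simplicial model: atomic propositions label the vertices. -/
structure LocalSimpData (A AP V : Type) where
  S : Set (Finset V)
  chi : V → A
  Wld : Set (Finset V)
  vlabel : V → Set AP

namespace LocalSimpData

variable {A AP V : Type}

/-- A facet: a simplex maximal under inclusion. -/
def IsFacet (C : LocalSimpData A AP V) (X : Finset V) : Prop :=
  X ∈ C.S ∧ ∀ Y ∈ C.S, X ⊆ Y → X = Y

/-- `C` is a local simplicial model with respect to the ownership map `owner : AP → A`: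
a chromatic simplicial complex with `Facets ⊆ Wld ⊆ S`, where each vertex is labelled
with atomic propositions belonging to its colour. -/
def IsModel (C : LocalSimpData A AP V) (owner : AP → A) : Prop :=
  (∀ X ∈ C.S, X.Nonempty) ∧
  (∀ v : V, ({v} : Finset V) ∈ C.S) ∧
  (∀ X ∈ C.S, ∀ Y : Finset V, Y ⊆ X → Y.Nonempty → Y ∈ C.S) ∧
  (∀ X ∈ C.S, ∀ v ∈ X, ∀ w ∈ X, C.chi v = C.chi w → v = w) ∧
  (∀ X, C.IsFacet X → X ∈ C.Wld) ∧ C.Wld ⊆ C.S ∧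
  (∀ v : V, ∀ p ∈ C.vlabel v, owner p = C.chi v)

/-- The labelling of a world: the union of the labellings of its vertices. -/
def wlabel (C : LocalSimpData A AP V) (X : Finset V) : Set AP :=
  ⋃ v ∈ X, C.vlabel v

end LocalSimpData

/-- Purely propositional formulas. -/
inductive PForm (AP : Type) : Type
  | atom : AP → PForm AP
  | neg : PForm AP → PForm AP
  | and : PForm AP → PForm AP → PForm AP

/-- The atomic propositions occurring in a propositional formula. -/
def PForm.atoms {AP : Type} : PForm AP → Set AP
  | .atom p => {p}
  | .neg ψ => ψ.atoms
  | .and ψ χ => ψ.atoms ∪ χ.atoms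

/-- Satisfaction of propositional formulas at a world of a local simplicial model. -/
def PForm.psat {A AP V : Type} (C : LocalSimpData A AP V) (w : Finset V) : PForm AP → Prop
  | .atom p => p ∈ C.wlabel w
  | .neg ψ => ¬ PForm.psat C w ψ
  | .and ψ χ => PForm.psat C w ψ ∧ PForm.psat C w χ

/-- The guarded positive epistemic fragment:
`φ ::= (alive_B ⇒ ψ_B) | φ∧φ | φ∨φ | D_U φ | C_U φ`. -/
inductive GForm (A AP : Type) : Type
  | guard : Finset A → PForm AP → GForm A AP
  | and : GForm A AP → GForm A AP → GForm A AP
  | or : GForm A AP → GForm A AP → GForm A AP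
  | dk : Finset A → GForm A AP → GForm A AP
  | ck : Finset A → GForm A AP → GForm A AP

/-- Well-formedness of guarded formulas: in a guard `alive_B ⇒ ψ_B`, all atomic
propositions of `ψ_B` belong to agents of `B`. -/
def GForm.WF {A AP : Type} (owner : AP → A) : GForm A AP → Prop
  | .guard B ψ => ∀ p ∈ ψ.atoms, owner p ∈ B
  | .and φ₁ φ₂ => φ₁.WF owner ∧ φ₂.WF owner
  | .or φ₁ φ₂ => φ₁.WF owner ∧ φ₂.WF owner
  | .dk _ φ => φ.WF owner
  | .ck _ φ => φ.WF owner

/-- Reachability through a sequence of worlds, consecutive ones sharing a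
`U`-coloured simplex. -/
def creach {A AP V : Type} (C : LocalSimpData A AP V) (U : Finset A) :
    Finset V → Finset V → Prop :=
  Relation.ReflTransGen
    (fun X Y => Y ∈ C.Wld ∧ (↑U : Set A) ⊆ C.chi '' ((↑X : Set V) ∩ ↑Y))

/-- Satisfaction of guarded positive formulas on local simplicial models. -/
def GForm.gsat {A AP V : Type} (C : LocalSimpData A AP V) :
    Finset V → GForm A AP → Prop
  | w, .guard B ψ => ((↑B : Set A) ⊆ C.chi '' (↑w : Set V)) → ψ.psat C w
  | w, .and φ₁ φ₂ => φ₁.gsat C w ∧ φ₂.gsat C w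
  | w, .or φ₁ φ₂ => φ₁.gsat C w ∨ φ₂.gsat C w
  | w, .dk U φ => ∀ w' ∈ C.Wld, (↑U : Set A) ⊆ C.chi '' ((↑w : Set V) ∩ ↑w') → φ.gsat C w'
  | w, .ck U φ => ∀ w' ∈ C.Wld, creach C U w w' → φ.gsat C w'

/-- Image of a simplex under a vertex map. -/
def fimage {V V' : Type} (f : V → V') (X : Finset V) : Finset V' :=
  X.image f

/-- Morphisms of local simplicial models: map simplexes to simplexes and worlds to
worlds, preserving colours and vertex labellings. -/
def IsMorphism {A AP V V' : Type} (C : LocalSimpData A AP V) (D : LocalSimpData A AP V')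
    (f : V → V') : Prop :=
  (∀ X ∈ C.S, fimage f X ∈ D.S) ∧
  (∀ X ∈ C.Wld, fimage f X ∈ D.Wld) ∧
  (∀ v : V, D.chi (f v) = C.chi v) ∧
  (∀ v : V, D.vlabel (f v) = C.vlabel v)

end

theorem Set.subset_image_inter_trans {V A : Type} {χ : V → A} {X Y Z : Set V} {B : Set A}
    (hY : Set.InjOn χ Y) (hXY : B ⊆ χ '' (X ∩ Y)) (hYZ : B ⊆ χ '' (Y ∩ Z)) :
    B ⊆ χ '' (X ∩ Z) := by
  intro a ha
  obtain ⟨v, ⟨hvX, hvY⟩, rfl⟩ := hXY ha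
  obtain ⟨u, ⟨huY, huZ⟩, hu⟩ := hYZ ha
  obtain rfl : u = v := hY huY hvY hu
  exact ⟨u, ⟨hvX, huZ⟩, rfl⟩

theorem Set.subset_of_mapsTo_of_subset_image_inter {V A : Type} {χ : V → A} {X Y : Set V}
    {B : Set A} (hX : Set.InjOn χ X) (hXB : Set.MapsTo χ X B) (h : B ⊆ χ '' (X ∩ Y)) :
    X ⊆ Y := by
  intro v hv
  obtain ⟨u, ⟨huX, huY⟩, hu⟩ := h (hXB hv)
  obtain rfl : u = v := hX huX hv hu
  exact huY

namespace SimpData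

variable {A AP V : Type} {C : SimpData A AP V} {w w' : Finset V}

theorem IsModel.injOn_chi (hM : C.IsModel) (hw : w ∈ C.Wld) : Set.InjOn C.chi ↑w :=
  fun _ hu _ hv huv => hM.1.2.2.2 w (hM.2.2 hw) _ hu _ hv huv

theorem IsModel.nonempty (hM : C.IsModel) (hw : w ∈ C.Wld) : w.Nonempty :=
  hM.1.1 w (hM.2.2 hw)

theorem Maximal.mem_wld_of_subset (hM : C.IsModel) (hmax : C.Maximal) (hw : w ∈ C.Wld)
    (hw'w : w' ⊆ w) (hw' : w'.Nonempty) : w' ∈ C.Wld :=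
  hmax ▸ hM.1.2.2.1 w (hM.2.2 hw) w' hw'w hw'

theorem sat_imp {φ ψ : Form A AP} : C.sat w (φ.imp ψ) ↔ (C.sat w φ → C.sat w ψ) := by
  simp only [Form.imp, Form.or, sat]
  tauto

variable [Nonempty AP]

theorem sat_verum : C.sat w (Form.verum : Form A AP) := by
  simp only [Form.verum, Form.or, sat]
  tauto

theorem not_sat_falsum : ¬ C.sat w (Form.falsum : Form A AP) :=
  fun h => h sat_verum

theorem sat_bigAnd {L : List (Form A AP)} :
    C.sat w (Form.bigAnd L) ↔ ∀ φ ∈ L, C.sat w φ := by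
  induction L with
  | nil => simpa [Form.bigAnd] using sat_verum
  | cons φ L ih => simp [Form.bigAnd, sat, ih]

theorem sat_bigOr {L : List (Form A AP)} : C.sat w (Form.bigOr L) ↔ ∃ φ ∈ L, C.sat w φ := by
  induction L with
  | nil => simpa [Form.bigOr] using not_sat_falsum
  | cons φ L ih =>
    simp only [Form.bigOr, Form.or, sat, ih, List.exists_mem_cons_iff, not_and_or, not_not]

theorem sat_aliveGrp (hw : w ∈ C.Wld) {B : Finset A} {hB : B.Nonempty} :
    C.sat w (Form.aliveGrp B hB : Form A AP) ↔ ↑B ⊆ C.chi '' ↑w := by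
  refine ⟨fun h => ?_, fun h hdead => not_sat_falsum (hdead w hw (by rwa [Set.inter_self]))⟩
  by_contra hB'
  exact h fun w' _ hww' => (hB' (hww'.trans (Set.image_mono Set.inter_subset_left))).elim

theorem sat_deadAgent (hw : w ∈ C.Wld) {a : A} :
    C.sat w (Form.deadAgent a : Form A AP) ↔ a ∉ C.chi '' ↑w := by
  refine ⟨fun h ha => not_sat_falsum (h w hw (by simpa using ha)), fun h w' _ hww' => ?_⟩
  exact (h (Set.image_mono Set.inter_subset_left (hww' (by simp)))).elim

theorem sat_deadGrp_compl [Fintype A] (hw : w ∈ C.Wld) {B : Finset A} :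
    C.sat w (Form.deadGrp Bᶜ : Form A AP) ↔ Set.MapsTo C.chi ↑w ↑B := by
  simp only [Form.deadGrp, sat_bigAnd, List.forall_mem_map, Finset.mem_toList,
    sat_deadAgent hw, Finset.mem_compl]
  constructor
  · intro h v hv
    by_contra hvB
    exact h _ hvB ⟨v, hv, rfl⟩
  · rintro h a ha ⟨v, hv, rfl⟩
    exact ha (h hv)

theorem sat_axNE [Fintype A] (hM : C.IsModel) (hw : w ∈ C.Wld) :
    C.sat w (Form.bigOr ((Finset.univ : Finset A).toList.map Form.aliveAgent)) := by
  obtain ⟨v, hv⟩ := hM.nonempty hw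
  refine sat_bigOr.2 ⟨_, List.mem_map_of_mem (Finset.mem_toList.2 (Finset.mem_univ (C.chi v))),
    fun hdead => (sat_deadAgent hw).1 hdead ⟨v, hv, rfl⟩⟩

/-- A world in which only agents of `B` are alive is determined by any of its
`B`-indistinguishable worlds in which the same holds. -/
theorem sat_axP [Fintype A] (hM : C.IsModel) (hw : w ∈ C.Wld) {B : Finset A}
    {hB : B.Nonempty} {φ : Form A AP} :
    C.sat w ((((Form.aliveGrp B hB).and (Form.deadGrp Bᶜ)).and φ).imp
      (Form.dk B hB ((Form.deadGrp Bᶜ).imp φ))) := by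
  rw [sat_imp]
  rintro ⟨⟨-, hdead⟩, hφ⟩ w' hw' hww'
  rw [sat_deadGrp_compl hw] at hdead
  rw [sat_imp, sat_deadGrp_compl hw']
  intro hdead'
  have hsub := Set.subset_of_mapsTo_of_subset_image_inter (hM.injOn_chi hw) hdead hww'
  have hsup := Set.subset_of_mapsTo_of_subset_image_inter (hM.injOn_chi hw') hdead'
    (Set.inter_comm (w' : Set V) w ▸ hww')
  rwa [← Finset.coe_injective (hsub.antisymm hsup)]

/-- The witness is the face of `w` spanned by the vertices coloured in `B`: it is a world by
maximality, it shares `B` with `w`, and all agents outside `B` are dead in it. -/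
theorem sat_maxAx [Fintype A] (hM : C.IsModel) (hmax : C.Maximal) (hw : w ∈ C.Wld)
    (B : Finset A) (hB : B.Nonempty) :
    C.sat w ((Form.aliveGrp B hB).imp
      (Form.neg (Form.dk B hB (Form.neg (Form.deadGrp Bᶜ)))) : Form A AP) := by
  rw [sat_imp, sat_aliveGrp hw]
  intro hBw hnot
  set w' := w.filter (fun v => C.chi v ∈ B)
  have hBw' : ↑B ⊆ C.chi '' ↑w' := by
    intro a ha
    obtain ⟨v, hv, rfl⟩ := hBw ha
    exact ⟨v, Finset.mem_filter.2 ⟨hv, ha⟩, rfl⟩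
  have hw' : w' ∈ C.Wld := hmax.mem_wld_of_subset hM hw (Finset.filter_subset _ _)
    ((hB.to_set.mono hBw').of_image)
  refine hnot w' hw' ?_ ((sat_deadGrp_compl hw').2 fun v hv => (Finset.mem_filter.1 hv).2)
  rwa [Set.inter_eq_right.2 (Finset.coe_subset.2 (Finset.filter_subset _ _))]

theorem sat_of_prf [Fintype A] (hM : C.IsModel) {Ax : Form A AP → Prop}
    (hAx : ∀ φ, Ax φ → ∀ w ∈ C.Wld, C.sat w φ) {φ : Form A AP} (h : Prf Ax φ) :
    ∀ w ∈ C.Wld, C.sat w φ := by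
  induction h with
  | taut ht => exact fun w _ => ht (C.sat w) (fun _ => Iff.rfl) (fun _ _ => Iff.rfl)
  | mp _ _ ihimp ih => exact fun w hw => sat_imp.1 (ihimp w hw) (ih w hw)
  | nec _ _ _ ih => exact fun _ _ w' hw' _ => ih w' hw'
  | axK =>
    refine fun _ _ => sat_imp.2 fun himp => sat_imp.2 fun h w' hw' hww' => ?_
    exact sat_imp.1 (himp w' hw' hww') (h w' hw' hww')
  | axB =>
    refine fun w hw => sat_imp.2 fun h w' _ hww' hnot => ?_
    exact hnot w hw (Set.inter_comm (w' : Set V) w ▸ hww') h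
  | ax4 =>
    refine fun _ _ => sat_imp.2 fun h _ hw' hww' w'' hw'' hw'w'' => ?_
    exact h w'' hw'' (Set.subset_image_inter_trans (hM.injOn_chi hw') hww' hw'w'')
  | axMono _ _ _ _ hsub =>
    exact fun _ _ => sat_imp.2 fun h w' hw' hww' =>
      h w' hw' ((Finset.coe_subset.2 hsub).trans hww')
  | axUnion =>
    refine fun w hw => sat_imp.2 fun ⟨h, h'⟩ => ?_
    rw [sat_aliveGrp hw] at h h' ⊢
    rw [Finset.coe_union]
    exact Set.union_subset h h'
  | axNE => exact fun _ hw => sat_axNE hM hw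
  | axP => exact fun _ hw => sat_axP hM hw
  | extra hφ => exact hAx _ hφ

end SimpData

/-- Soundness of Axiom `Max` for maximal simplicial models, and hence
soundness of the proof system `SCmax` with respect to maximal simplicial models. -/
theorem soundness_SCmax (A AP : Type) [Fintype A] [Nonempty AP] :
    (∀ (V : Type) (C : SimpData A AP V), C.IsModel → C.Maximal →
      ∀ w ∈ C.Wld, ∀ (B : Finset A) (hB : B.Nonempty), B ≠ Finset.univ →
        C.sat w ((Form.aliveGrp B hB).imp
          (Form.neg (Form.dk B hB (Form.neg (Form.deadGrp Bᶜ)))))) ∧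
    (∀ φ : Form A AP, SCmax φ →
      ∀ (V : Type) (C : SimpData A AP V), C.IsModel → C.Maximal →
        ∀ w ∈ C.Wld, C.sat w φ) := by
  refine ⟨fun V C hM hmax w hw B hB _ => SimpData.sat_maxAx hM hmax hw B hB, ?_⟩
  intro φ hφ V C hM hmax
  refine SimpData.sat_of_prf hM ?_ hφ
  rintro _ ⟨B, hB, -, rfl⟩ w hw
  exact SimpData.sat_maxAx hM hmax hw B hB
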